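/- arXiv:1411.1966 — 3 statements merged into one kernel-verified Lean document; each statement's English description precedes it below -/
import Mathlib

section
/- The node set P_m = {z_i : 0 ≤ i < b^m} equals the set of integer multiples {j · z_{b^{m-1}} mod 1 : 0 ≤ j < b^m}, i.e., P_m is the node set of a rank-1 lattice generated by z_{b^{m-1}}. -/
/-!
Since `b ^ (m - 1 - ℓ) z_{b^{m-1}} ≡ z_{b^ℓ} (mod 1)`, for `i < b ^ m` with digits `i_ℓ` we get
`z_i ≡ (∑_ℓ i_ℓ b ^ (m - 1 - ℓ)) z_{b^{m-1}} (mod 1)`. The coefficient is `i` with its `m` base-`b`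
digits reversed, and digit reversal permutes `{0, …, b ^ m - 1}`.
-/

open Finset

theorem Int.fract_sum_natCast_mul_fract {ι R : Type*} [CommRing R] [LinearOrder R]
    [IsStrictOrderedRing R] [FloorRing R] (s : Finset ι) (n : ι → ℕ) (x : ι → R) :
    Int.fract (∑ i ∈ s, (n i : R) * Int.fract (x i)) = Int.fract (∑ i ∈ s, (n i : R) * x i) := by
  rw [Int.fract_eq_fract]
  refine ⟨-∑ i ∈ s, (n i : ℤ) * ⌊x i⌋, ?_⟩
  push_cast
  rw [← sum_sub_distrib, ← sum_neg_distrib]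
  refine sum_congr rfl fun i _ => ?_
  rw [← mul_sub, Int.fract_sub_self]
  ring

theorem Nat.sum_range_length_digits_getD_smul {M : Type*} [AddCommMonoid M] {b m i : ℕ}
    (hb : 1 < b) (hi : i < b ^ m) (v : ℕ → M) :
    ∑ ℓ ∈ range (b.digits i).length, (b.digits i).getD ℓ 0 • v ℓ =
      ∑ ℓ ∈ range m, (i / b ^ ℓ % b) • v ℓ := by
  have hlen : (b.digits i).length ≤ m := (Nat.digits_length_le_iff hb i).2 hi
  simp_rw [← Nat.getD_digits i _ hb]
  refine sum_subset (range_subset_range.2 hlen) fun ℓ _ hℓ => ?_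
  rw [List.getD_eq_default _ _ (by simpa using hℓ), zero_smul]

def digitRev (b m : ℕ) : Equiv.Perm (Fin (b ^ m)) :=
  finFunctionFinEquiv.permCongr (Fin.revPerm.arrowCongr (Equiv.refl (Fin b)))

theorem digitRev_val (b m : ℕ) (i : Fin (b ^ m)) :
    (digitRev b m i : ℕ) = ∑ ℓ ∈ range m, i / b ^ ℓ % b * b ^ (m - 1 - ℓ) := by
  rw [← sum_range_reflect]
  simp only [digitRev, Equiv.permCongr_apply, finFunctionFinEquiv_apply, Equiv.arrowCongr_apply,
    finFunctionFinEquiv_symm_apply_val, Fin.revPerm_symm, Fin.revPerm_apply, Fin.val_rev,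
    Equiv.coe_refl, Function.comp_apply, id]
  rw [Fin.sum_univ_eq_sum_range (fun ℓ => i / b ^ (m - (ℓ + 1)) % b * b ^ ℓ)]
  refine sum_congr rfl fun ℓ hℓ => ?_
  have hℓ : ℓ < m := mem_range.1 hℓ
  rw [show m - (ℓ + 1) = m - 1 - ℓ by omega, show m - 1 - (m - 1 - ℓ) = ℓ by omega]

theorem setOf_exists_lt_eq_range {α : Type*} (N : ℕ) (f : ℕ → α) :
    {x | ∃ i < N, x = f i} = Set.range (fun i : Fin N => f i) := by
  ext x
  simp [eq_comm, Fin.exists_iff]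

theorem fract_sum_digit_mul_fract_eq_fract_digitRev_mul {b m : ℕ} (y : ℝ) (i : Fin (b ^ m)) :
    Int.fract (∑ ℓ ∈ range m, ((i / b ^ ℓ % b : ℕ) : ℝ) * Int.fract ((b : ℝ) ^ (m - 1 - ℓ) * y)) =
      Int.fract ((digitRev b m i : ℝ) * y) := by
  rw [Int.fract_sum_natCast_mul_fract, digitRev_val]
  push_cast
  rw [sum_mul]
  exact congrArg _ (sum_congr rfl fun ℓ _ => by ring)

theorem stmt2_general (b d m : ℕ) (hb : b.Prime)
    (z : ℕ → Fin d → ℝ)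
    (hprop : ∀ n ℓ, ℓ ≤ n → ∀ c, Int.fract ((b : ℝ) ^ ℓ * z n c) = z (n - ℓ) c)
    (zi : ℕ → Fin d → ℝ)
    (hzi : ∀ i c, zi i c = Int.fract (∑ ℓ ∈ Finset.range (Nat.digits b i).length,
        (((Nat.digits b i).getD ℓ 0 : ℕ) : ℝ) * z ℓ c)) :
    {x : Fin d → ℝ | ∃ i < b ^ m, x = zi i} =
      {x : Fin d → ℝ | ∃ j < b ^ m, x = fun c => Int.fract ((j : ℝ) * z (m - 1) c)} := by
  have hz_lattice : ∀ ℓ < m, ∀ c, z ℓ c = Int.fract ((b : ℝ) ^ (m - 1 - ℓ) * z (m - 1) c) :=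
    fun ℓ hℓ c => by rw [hprop _ _ (Nat.sub_le _ _), Nat.sub_sub_self (by omega)]
  have hzi_digitRev : ∀ i : Fin (b ^ m),
      zi i = fun c => Int.fract ((digitRev b m i : ℝ) * z (m - 1) c) := by
    intro i
    funext c
    simp_rw [hzi, ← nsmul_eq_mul, Nat.sum_range_length_digits_getD_smul hb.one_lt i.2, nsmul_eq_mul]
    rw [← fract_sum_digit_mul_fract_eq_fract_digitRev_mul]
    exact congrArg _ (sum_congr rfl fun ℓ hℓ => by rw [hz_lattice ℓ (mem_range.1 hℓ)])
  rw [setOf_exists_lt_eq_range, setOf_exists_lt_eq_range, ← (digitRev b m).surjective.range_comp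
    fun j c => Int.fract ((j : ℕ) * z (m - 1) c)]
  exact congrArg Set.range (funext hzi_digitRev)

/-- The node set P_m = {z_i : 0 ≤ i < b^m} equals
{j·z_{b^{m-1}} mod 1 : 0 ≤ j < b^m}, i.e. P_m is the node set of a rank-1 lattice
generated by z_{b^{m-1}}.  Here `z ℓ` denotes z_{b^ℓ}, the points lie in [0,1)^d,
satisfy b^ℓ z_{b^n} mod 1 = z_{b^{n-ℓ}} for ℓ ≤ n, and
z_i := (∑_ℓ i_ℓ z_{b^ℓ}) mod 1 with i_ℓ the b-ary digits of i. -/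
theorem stmt2 (b d m : ℕ) (hb : b.Prime) (hm : 1 ≤ m)
    (z : ℕ → Fin d → ℝ)
    (hz : ∀ n c, z n c ∈ Set.Ico (0 : ℝ) 1)
    (hprop : ∀ n ℓ, ℓ ≤ n → ∀ c, Int.fract ((b : ℝ) ^ ℓ * z n c) = z (n - ℓ) c)
    (zi : ℕ → Fin d → ℝ)
    (hzi : ∀ i c, zi i c = Int.fract (∑ ℓ ∈ Finset.range (Nat.digits b i).length,
        (((Nat.digits b i).getD ℓ 0 : ℕ) : ℝ) * z ℓ c)) :
    {x : Fin d → ℝ | ∃ i < b ^ m, x = zi i} =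
      {x : Fin d → ℝ | ∃ j < b ^ m, x = fun c => Int.fract ((j : ℝ) * z (m - 1) c)} :=
  stmt2_general b d m hb z hprop zi hzi
end

section
/- If l ∈ Z^d satisfies ⟨l, z_1⟩ = 1/b, then for any k ∈ Z^d, m ∈ N_0, and a'' ∈ {0,…,b−1}, ν̃_{m+1}(k + a'' b^m l) = ν̃_m(k) + ((a + a'') mod b)·b^m, where a ∈ {0,…,b−1} is determined by ν̃_{m+1}(k) = ν̃_m(k) + a b^m. In particular, for every a' ∈ {0,…,b−1} the set {κ ∈ Z^d : ν̃_{m+1}(κ) = ν̃_m(k) + a' b^m} is nonempty. -/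
/-!
Since `b^m z_{b^m} ≡ z_1 (mod 1)`, we get `⟨b^m l, z_{b^m}⟩ = ⟨l, z_1⟩ = 1/b`. Writing
`⟨k, z_{b^m}⟩ = (t + a)/b` with `t = ⟨k, z_{b^{m-1}}⟩ ∈ [0, 1)`, adding `a'' b^m l` to `k` turns this
into `(t + a + a'')/b mod 1 = (t + (a + a'') mod b)/b`: the top digit `a` is shifted by `a''`
modulo `b`. Every digit `a'` is reached with `a'' ≡ a' - a (mod b)`.
-/

open Finset

namespace Int

section

variable {R : Type*} [Ring R] [LinearOrder R] [IsOrderedRing R] [FloorRing R]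

theorem fract_sum_intCast_mul_fract {ι : Type*} (s : Finset ι) (n : ι → ℤ) (x : ι → R) :
    fract (∑ i ∈ s, (n i : R) * fract (x i)) = fract (∑ i ∈ s, (n i : R) * x i) :=
  fract_eq_fract.2 ⟨-∑ i ∈ s, n i * ⌊x i⌋, by
    push_cast
    simp only [fract, mul_sub, sum_sub_distrib]
    abel⟩

theorem fract_fract_add_intCast_mul_fract (x y : R) (n : ℤ) :
    fract (fract x + n * fract y) = fract (x + n * y) :=
  fract_eq_fract.2 ⟨-⌊x⌋ - n * ⌊y⌋, by simp only [fract, mul_sub]; push_cast; abel⟩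

end

theorem fract_add_natCast_div {k : Type*} [Field k] [LinearOrder k] [IsStrictOrderedRing k]
    [FloorRing k] {t : k} (ht₀ : 0 ≤ t) (ht₁ : t < 1) (n : ℕ) {b : ℕ} (hb : 0 < b) :
    fract ((t + n) / b) = (t + (n % b : ℕ)) / b := by
  have hb' : (0 : k) < b := by exact_mod_cast hb
  have hmod : ((n % b : ℕ) : k) + 1 ≤ b := by exact_mod_cast Nat.mod_lt n hb
  have hsplit : (t + n) / b = (t + (n % b : ℕ)) / b + (n / b : ℕ) := by
    conv_lhs => rw [← Nat.mod_add_div n b]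
    push_cast
    field_simp
    ring
  rw [hsplit, fract_add_natCast, fract_eq_self]
  exact ⟨by positivity, (div_lt_one hb').2 (by linarith)⟩

end Int

theorem Nat.exists_add_mod_eq (a : ℕ) {a' b : ℕ} (h : a' < b) : ∃ c, (a + c) % b = a' := by
  refine ⟨a' + b * a - a, ?_⟩
  have : a ≤ b * a := Nat.le_mul_of_pos_left a (by omega)
  rw [show a + (a' + b * a - a) = a' + b * a by omega, Nat.add_mul_mod_self_left,
    Nat.mod_eq_of_lt h]

theorem stmt17_general (b d m : ℕ) (hb : b.Prime)
    (z1 zp zc : Fin d → ℝ) (l k : Fin d → ℤ)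
    (hl : Int.fract (∑ c, (l c : ℝ) * z1 c) = 1 / b)
    (hbm : ∀ c, Int.fract ((b : ℝ) ^ m * zc c) = z1 c)
    (a : ℕ)
    (ha : (b : ℝ) ^ (m + 1) * Int.fract (∑ c, (k c : ℝ) * zc c) =
      (b : ℝ) ^ m * Int.fract (∑ c, (k c : ℝ) * zp c) + (a : ℝ) * (b : ℝ) ^ m) :
    (∀ a'' : ℕ, a'' < b →
        (b : ℝ) ^ (m + 1) *
            Int.fract (∑ c, ((k c + (a'' * b ^ m : ℕ) * l c : ℤ) : ℝ) * zc c) =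
          (b : ℝ) ^ m * Int.fract (∑ c, (k c : ℝ) * zp c) +
            (((a + a'') % b : ℕ) : ℝ) * (b : ℝ) ^ m) ∧
      (∀ a' : ℕ, a' < b → ∃ κ : Fin d → ℤ,
        (b : ℝ) ^ (m + 1) * Int.fract (∑ c, (κ c : ℝ) * zc c) =
          (b : ℝ) ^ m * Int.fract (∑ c, (k c : ℝ) * zp c) + (a' : ℝ) * (b : ℝ) ^ m) := by
  have hb₀ : (0 : ℝ) < b := by exact_mod_cast hb.pos
  have ht₀ := Int.fract_nonneg (∑ c, (k c : ℝ) * zp c)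
  have ht₁ := Int.fract_lt_one (∑ c, (k c : ℝ) * zp c)
  generalize Int.fract (∑ c, (k c : ℝ) * zp c) = t at ha ht₀ ht₁ ⊢
  have hk : Int.fract (∑ c, (k c : ℝ) * zc c) = (t + a) / b := by
    rw [pow_succ] at ha
    field_simp
    nlinarith [pow_pos hb₀ m]
  have hl' : Int.fract (∑ c, (l c : ℝ) * ((b : ℝ) ^ m * zc c)) = 1 / b := by
    rw [← Int.fract_sum_intCast_mul_fract]
    simpa only [hbm] using hl
  have shift : ∀ a'' : ℕ, (b : ℝ) ^ (m + 1) *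
      Int.fract (∑ c, ((k c + (a'' * b ^ m : ℕ) * l c : ℤ) : ℝ) * zc c) =
        (b : ℝ) ^ m * t + (((a + a'') % b : ℕ) : ℝ) * (b : ℝ) ^ m := by
    intro a''
    have hsum : ∑ c, ((k c + (a'' * b ^ m : ℕ) * l c : ℤ) : ℝ) * zc c =
        ∑ c, (k c : ℝ) * zc c + ((a'' : ℤ) : ℝ) * ∑ c, (l c : ℝ) * ((b : ℝ) ^ m * zc c) := by
      rw [mul_sum, ← sum_add_distrib]
      refine sum_congr rfl fun c _ => ?_
      push_cast
      ring
    rw [hsum, ← Int.fract_fract_add_intCast_mul_fract, hk, hl', Int.cast_natCast,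
      show (t + a) / b + a'' * (1 / b) = (t + (a + a'' : ℕ)) / b by push_cast; ring,
      Int.fract_add_natCast_div ht₀ ht₁ _ hb.pos, pow_succ]
    field_simp
  refine ⟨fun a'' _ => shift a'', fun a' ha' => ?_⟩
  obtain ⟨a'', rfl⟩ := Nat.exists_add_mod_eq a ha'
  exact ⟨_, shift a''⟩

/-- If l ∈ Z^d satisfies ⟨l, z_1⟩ = 1/b, then for any k ∈ Z^d, m ∈ N_0 and
a'' ∈ {0,…,b−1}, ν̃_{m+1}(k + a'' b^m l) = ν̃_m(k) + ((a + a'') mod b)·b^m, where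
a ∈ {0,…,b−1} is determined by ν̃_{m+1}(k) = ν̃_m(k) + a b^m.  In particular, for every
a' ∈ {0,…,b−1} the set {κ ∈ Z^d : ν̃_{m+1}(κ) = ν̃_m(k) + a' b^m} is nonempty.
Here zc = z_{b^m} (so ν̃_{m+1}(k) = b^{m+1}⟨k,zc⟩), zp = z_{b^{m-1}}
(so ν̃_m(k) = b^m⟨k,zp⟩, with zp = 0 when m = 0 giving ν̃_0 = 0),
b^m·zc mod 1 = z_1, and ⟨k,x⟩ := (∑_c k_c x_c) mod 1. -/
theorem stmt17 (b d m : ℕ) (hb : b.Prime)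
    (z1 zp zc : Fin d → ℝ) (l k : Fin d → ℤ)
    (hl : Int.fract (∑ c, (l c : ℝ) * z1 c) = 1 / b)
    (hbm : ∀ c, Int.fract ((b : ℝ) ^ m * zc c) = z1 c)
    (a : ℕ) (halt : a < b)
    (ha : (b : ℝ) ^ (m + 1) * Int.fract (∑ c, (k c : ℝ) * zc c) =
      (b : ℝ) ^ m * Int.fract (∑ c, (k c : ℝ) * zp c) + (a : ℝ) * (b : ℝ) ^ m) :
    (∀ a'' : ℕ, a'' < b →
        (b : ℝ) ^ (m + 1) *
            Int.fract (∑ c, ((k c + (a'' * b ^ m : ℕ) * l c : ℤ) : ℝ) * zc c) =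
          (b : ℝ) ^ m * Int.fract (∑ c, (k c : ℝ) * zp c) +
            (((a + a'') % b : ℕ) : ℝ) * (b : ℝ) ^ m) ∧
      (∀ a' : ℕ, a' < b → ∃ κ : Fin d → ℤ,
        (b : ℝ) ^ (m + 1) * Int.fract (∑ c, (κ c : ℝ) * zc c) =
          (b : ℝ) ^ m * Int.fract (∑ c, (k c : ℝ) * zp c) + (a' : ℝ) * (b : ℝ) ^ m) :=
  stmt17_general b d m hb z1 zp zc l k hl hbm a ha
end

section
/- Suppose f lies in the cone C, i.e., Ŝ_{ℓ,m}(f) ≤ ω̂(m−ℓ) Š_m(f) for all ℓ ≤ m and Š_m(f) ≤ ω̊(m−ℓ) S_ℓ(f) for all ℓ* ≤ ℓ ≤ m. Then whenever ω̂(m−ℓ)ω̊(m−ℓ) < 1 and ℓ ≥ ℓ*, the true coefficient sum is bounded by the discrete one: S_ℓ(f) ≤ S̃_{ℓ,m}(f) / (1 − ω̂(m−ℓ)ω̊(m−ℓ)), and consequently |∫_{[0,1)^d} f dx − Î_m(f)| ≤ [ω̂(m)ω̊(m−ℓ) / (1 − ω̂(m−ℓ)ω̊(m−ℓ))] · S̃_{ℓ,m}(f).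 -/
/-! Aliasing gives `f̂_κ = f̃_{m,κ} − ∑_{λ≥1} f̂_{κ+λb^m} e^{2πiθ}`, so by the triangle inequality
`S_ℓ ≤ S̃_{ℓ,m} + Ŝ_{ℓ,m}`. The two cone conditions bound `Ŝ_{ℓ,m} ≤ ω̂ ω̊ S_ℓ`, which can be absorbed
into the left side when `ω̂ ω̊ < 1`. The cubature error is at most `Ŝ_{0,m} ≤ ω̂(m) Š_m ≤ ω̂(m) ω̊ S_ℓ`,
and the first bound finishes it. -/

theorem norm_exp_two_pi_I_mul_ofReal (t : ℝ) :
    ‖Complex.exp (2 * Real.pi * Complex.I * (t : ℂ))‖ = 1 := by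
  have h : 2 * Real.pi * Complex.I * (t : ℂ) = ((2 * Real.pi * t : ℝ) : ℂ) * Complex.I := by
    push_cast; ring
  rw [h, Complex.norm_exp_ofReal_mul_I]

theorem norm_le_norm_add_tsum_add_tsum_norm {ι E : Type*} [SeminormedAddCommGroup E]
    {v : ι → E} (hv : Summable fun i => ‖v i‖) (a : E) :
    ‖a‖ ≤ ‖a + ∑' i, v i‖ + ∑' i, ‖v i‖ :=
  calc ‖a‖ = ‖(a + ∑' i, v i) - ∑' i, v i‖ := by rw [add_sub_cancel_right]
    _ ≤ ‖a + ∑' i, v i‖ + ‖∑' i, v i‖ := norm_sub_le _ _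
    _ ≤ ‖a + ∑' i, v i‖ + ∑' i, ‖v i‖ := by gcongr; exact norm_tsum_le_tsum_norm hv

theorem add_succ_mul_injective (κ : ℕ) {n : ℕ} (hn : 0 < n) :
    Function.Injective fun lam : ℕ => κ + (lam + 1) * n := by
  intro x y h
  have := Nat.eq_of_mul_eq_mul_right hn (Nat.add_left_cancel h)
  omega

theorem norm_le_norm_aliased_add_tsum_norm {f : ℕ → ℂ} (hf : Summable fun κ => ‖f κ‖)
    {n : ℕ} (hn : 0 < n) (θ : ℕ → ℝ) (κ : ℕ) :
    ‖f κ‖ ≤ ‖f κ + ∑' lam : ℕ, f (κ + (lam + 1) * n) *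
        Complex.exp (2 * Real.pi * Complex.I * (θ lam : ℝ))‖ +
      ∑' lam : ℕ, ‖f (κ + (lam + 1) * n)‖ := by
  have hnorm : ∀ lam, ‖f (κ + (lam + 1) * n) *
      Complex.exp (2 * Real.pi * Complex.I * (θ lam : ℝ))‖ = ‖f (κ + (lam + 1) * n)‖ := by
    intro lam
    rw [norm_mul, norm_exp_two_pi_I_mul_ofReal, mul_one]
  have hsummable : Summable fun lam => ‖f (κ + (lam + 1) * n) *
      Complex.exp (2 * Real.pi * Complex.I * (θ lam : ℝ))‖ := by
    simp only [hnorm]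
    exact hf.comp_injective (add_succ_mul_injective κ hn)
  simpa only [hnorm] using norm_le_norm_add_tsum_add_tsum_norm hsummable (f κ)

theorem le_div_one_sub_of_le_add_of_le_mul {s t h p : ℝ} (hs : s ≤ t + h) (hh : h ≤ p * s)
    (hp : p < 1) : s ≤ t / (1 - p) := by
  rw [le_div_iff₀ (by linarith)]
  linarith

theorem stmt18_general (b : ℕ) (hb : 2 ≤ b) (lstar : ℕ)
    (fhat : ℕ → ℂ) (ftil : ℕ → ℕ → ℂ) (θ : ℕ → ℕ → ℕ → ℝ)
    (hsum : Summable fun κ : ℕ => ‖fhat κ‖)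
    (halias : ∀ m κ : ℕ, ftil m κ = fhat κ +
      ∑' lam : ℕ, fhat (κ + (lam + 1) * b ^ m) *
        Complex.exp (2 * Real.pi * Complex.I * (θ m κ lam : ℝ)))
    (S : ℕ → ℝ) (Shat : ℕ → ℕ → ℝ) (Scheck : ℕ → ℝ) (Stil : ℕ → ℕ → ℝ)
    (hS : ∀ ℓ, S ℓ = ∑ κ ∈ Finset.Ico (b ^ ℓ / b) (b ^ ℓ), ‖fhat κ‖)
    (hShat : ∀ ℓ m, Shat ℓ m = ∑ κ ∈ Finset.Ico (b ^ ℓ / b) (b ^ ℓ),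
      ∑' lam : ℕ, ‖fhat (κ + (lam + 1) * b ^ m)‖)
    (hStil : ∀ ℓ m, Stil ℓ m = ∑ κ ∈ Finset.Ico (b ^ ℓ / b) (b ^ ℓ),
      ‖ftil m κ‖)
    (ωhat ωring : ℕ → ℝ)
    (hωhat : ∀ n, 0 ≤ ωhat n) (hωring : ∀ n, 0 ≤ ωring n)
    (hcone1 : ∀ ℓ m, ℓ ≤ m → Shat ℓ m ≤ ωhat (m - ℓ) * Scheck m)
    (hcone2 : ∀ ℓ m, lstar ≤ ℓ → ℓ ≤ m → Scheck m ≤ ωring (m - ℓ) * S ℓ)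
    (err : ℕ → ℂ)
    (herr : ∀ m, ‖err m‖ ≤ Shat 0 m)
    (ℓ m : ℕ) (hl : lstar ≤ ℓ) (hlm : ℓ ≤ m)
    (hprod : ωhat (m - ℓ) * ωring (m - ℓ) < 1) :
    S ℓ ≤ Stil ℓ m / (1 - ωhat (m - ℓ) * ωring (m - ℓ)) ∧
      ‖err m‖ ≤
        ωhat m * ωring (m - ℓ) / (1 - ωhat (m - ℓ) * ωring (m - ℓ)) * Stil ℓ m := by
  have hcheck : Scheck m ≤ ωring (m - ℓ) * S ℓ := hcone2 ℓ m hl hlm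
  have haliased : S ℓ ≤ Stil ℓ m + Shat ℓ m := by
    rw [hS, hStil, hShat, ← Finset.sum_add_distrib]
    refine Finset.sum_le_sum fun κ _ => ?_
    rw [halias]
    exact norm_le_norm_aliased_add_tsum_norm hsum (pow_pos (by omega) m) (θ m κ) κ
  have hhat : Shat ℓ m ≤ ωhat (m - ℓ) * ωring (m - ℓ) * S ℓ := by
    rw [mul_assoc]
    exact (hcone1 ℓ m hlm).trans (mul_le_mul_of_nonneg_left hcheck (hωhat _))
  have hSℓ := le_div_one_sub_of_le_add_of_le_mul haliased hhat hprod
  refine ⟨hSℓ, ?_⟩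
  calc ‖err m‖ ≤ ωhat m * Scheck m := by simpa using (herr m).trans (hcone1 0 m m.zero_le)
    _ ≤ ωhat m * (ωring (m - ℓ) * (Stil ℓ m / (1 - ωhat (m - ℓ) * ωring (m - ℓ)))) :=
      mul_le_mul_of_nonneg_left
        (hcheck.trans (mul_le_mul_of_nonneg_left hSℓ (hωring _))) (hωhat m)
    _ = _ := by ring

/-- Suppose f lies in the cone C, i.e. Ŝ_{ℓ,m}(f) ≤ ω̂(m−ℓ)Š_m(f) for ℓ ≤ m
and Š_m(f) ≤ ω̊(m−ℓ)S_ℓ(f) for ℓ* ≤ ℓ ≤ m.  Then whenever ω̂(m−ℓ)ω̊(m−ℓ) < 1 and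
ℓ* ≤ ℓ ≤ m, S_ℓ(f) ≤ S̃_{ℓ,m}(f)/(1 − ω̂(m−ℓ)ω̊(m−ℓ)), and consequently
|∫f − Î_m(f)| ≤ [ω̂(m)ω̊(m−ℓ)/(1 − ω̂(m−ℓ)ω̊(m−ℓ))]·S̃_{ℓ,m}(f).
Here f̂_κ are the true Fourier coefficients (indexed via the bijection k̃), absolutely
summable; the discrete coefficients satisfy the aliasing identity
f̃_{m,κ} = f̂_κ + ∑_{λ≥1} f̂_{κ+λb^m} e^{2πiθ_{m,κ,λ}};
S_ℓ = ∑_{κ=⌊b^{ℓ−1}⌋}^{b^ℓ−1}|f̂_κ| (lower limit ⌊b^{ℓ−1}⌋ = b^ℓ/b in ℕ-division),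
Ŝ_{ℓ,m} = ∑_{κ=⌊b^{ℓ−1}⌋}^{b^ℓ−1}∑_{λ≥1}|f̂_{κ+λb^m}|, Š_m = ∑_{κ≥b^m}|f̂_κ|,
S̃_{ℓ,m} = ∑_{κ=⌊b^{ℓ−1}⌋}^{b^ℓ−1}|f̃_{m,κ}|; the cubature error err m = ∫f − Î_m(f)
satisfies |err m| ≤ Ŝ_{0,m}(f); ω̂, ω̊ are nonnegative. -/
theorem stmt18 (b : ℕ) (hb : 2 ≤ b) (lstar : ℕ)
    (fhat : ℕ → ℂ) (ftil : ℕ → ℕ → ℂ) (θ : ℕ → ℕ → ℕ → ℝ)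
    (hsum : Summable fun κ : ℕ => ‖fhat κ‖)
    (halias : ∀ m κ : ℕ, ftil m κ = fhat κ +
      ∑' lam : ℕ, fhat (κ + (lam + 1) * b ^ m) *
        Complex.exp (2 * Real.pi * Complex.I * (θ m κ lam : ℝ)))
    (S : ℕ → ℝ) (Shat : ℕ → ℕ → ℝ) (Scheck : ℕ → ℝ) (Stil : ℕ → ℕ → ℝ)
    (hS : ∀ ℓ, S ℓ = ∑ κ ∈ Finset.Ico (b ^ ℓ / b) (b ^ ℓ), ‖fhat κ‖)
    (hShat : ∀ ℓ m, Shat ℓ m = ∑ κ ∈ Finset.Ico (b ^ ℓ / b) (b ^ ℓ),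
      ∑' lam : ℕ, ‖fhat (κ + (lam + 1) * b ^ m)‖)
    (hScheck : ∀ m, Scheck m = ∑' κ : ℕ, ‖fhat (κ + b ^ m)‖)
    (hStil : ∀ ℓ m, Stil ℓ m = ∑ κ ∈ Finset.Ico (b ^ ℓ / b) (b ^ ℓ),
      ‖ftil m κ‖)
    (ωhat ωring : ℕ → ℝ)
    (hωhat : ∀ n, 0 ≤ ωhat n) (hωring : ∀ n, 0 ≤ ωring n)
    (hcone1 : ∀ ℓ m, ℓ ≤ m → Shat ℓ m ≤ ωhat (m - ℓ) * Scheck m)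
    (hcone2 : ∀ ℓ m, lstar ≤ ℓ → ℓ ≤ m → Scheck m ≤ ωring (m - ℓ) * S ℓ)
    (err : ℕ → ℂ)
    (herr : ∀ m, ‖err m‖ ≤ Shat 0 m)
    (ℓ m : ℕ) (hl : lstar ≤ ℓ) (hlm : ℓ ≤ m)
    (hprod : ωhat (m - ℓ) * ωring (m - ℓ) < 1) :
    S ℓ ≤ Stil ℓ m / (1 - ωhat (m - ℓ) * ωring (m - ℓ)) ∧
      ‖err m‖ ≤
        ωhat m * ωring (m - ℓ) / (1 - ωhat (m - ℓ) * ωring (m - ℓ)) * Stil ℓ m :=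
  stmt18_general b hb lstar fhat ftil θ hsum halias S Shat Scheck Stil hS hShat hStil ωhat ωring
    hωhat hωring hcone1 hcone2 err herr ℓ m hl hlm hprod
end
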